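/- Strong duality holds between the two game LPs: the optimal value of min{μ : μ·e^{m2} ⪰ Aᵀx, eᵀx = 1, x ⪰ 0, μ ∈ ℝ} equals the optimal value of max{ν : ν·e^{m1} ⪯ Ay, eᵀy = 1, y ⪰ 0, ν ∈ ℝ}. -/

import Mathlib

/-! The payoff `x ⬝ᵥ A *ᵥ y` is continuous and linear in each strategy, and the strategy sets
are compact convex simplices, so Sion's minimax theorem gives a saddle point `(x, y)`. Its value
is feasible for both programs, and averaging the constraints of one program against a strategy
feasible for the other (weak duality) shows that no feasible `μ` lies below it and no feasible
`ν` above it. -/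

open Matrix

section WeakDuality

variable {𝕜 ι κ : Type*} [CommSemiring 𝕜] [PartialOrder 𝕜] [IsOrderedRing 𝕜] [Fintype ι] [Fintype κ]

lemma dotProduct_le_of_mem_stdSimplex {x v : ι → 𝕜} {c : 𝕜} (hx : x ∈ stdSimplex 𝕜 ι)
    (hv : ∀ i, v i ≤ c) : x ⬝ᵥ v ≤ c :=
  calc x ⬝ᵥ v ≤ ∑ i, x i * c :=
        Finset.sum_le_sum fun i _ => mul_le_mul_of_nonneg_left (hv i) (hx.1 i)
    _ = c := by rw [← Finset.sum_mul, hx.2, one_mul]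

lemma le_dotProduct_of_mem_stdSimplex {x v : ι → 𝕜} {c : 𝕜} (hx : x ∈ stdSimplex 𝕜 ι)
    (hv : ∀ i, c ≤ v i) : c ≤ x ⬝ᵥ v :=
  calc c = ∑ i, x i * c := by rw [← Finset.sum_mul, hx.2, one_mul]
    _ ≤ x ⬝ᵥ v := Finset.sum_le_sum fun i _ => mul_le_mul_of_nonneg_left (hv i) (hx.1 i)

theorem Matrix.le_of_mem_stdSimplex (A : Matrix ι κ 𝕜) {x : ι → 𝕜} {y : κ → 𝕜} {μ ν : 𝕜}
    (hx : x ∈ stdSimplex 𝕜 ι) (hy : y ∈ stdSimplex 𝕜 κ)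
    (hμ : ∀ j, (Aᵀ *ᵥ x) j ≤ μ) (hν : ∀ i, ν ≤ (A *ᵥ y) i) : ν ≤ μ :=
  calc ν ≤ x ⬝ᵥ (A *ᵥ y) := le_dotProduct_of_mem_stdSimplex hx hν
    _ = (Aᵀ *ᵥ x) ⬝ᵥ y := by rw [dotProduct_mulVec, mulVec_transpose]
    _ ≤ μ := by rw [dotProduct_comm]; exact dotProduct_le_of_mem_stdSimplex hy hμ

end WeakDuality

section Minimax

variable {ι κ : Type*} [Fintype ι] [Fintype κ] [Nonempty ι] [Nonempty κ]

theorem Matrix.exists_isSaddlePointOn_stdSimplex (A : Matrix ι κ ℝ) :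
    ∃ x ∈ stdSimplex ℝ ι, ∃ y ∈ stdSimplex ℝ κ,
      IsSaddlePointOn (stdSimplex ℝ ι) (stdSimplex ℝ κ) (fun x y => x ⬝ᵥ (A *ᵥ y)) x y := by
  refine Sion.exists_isSaddlePointOn (isPathConnected_stdSimplex ι).nonempty
    (convex_stdSimplex ℝ ι) (isCompact_stdSimplex ℝ ι) (fun y _ => ?_) (fun y _ => ?_)
    (convex_stdSimplex ℝ κ) (isPathConnected_stdSimplex κ).nonempty (isCompact_stdSimplex ℝ κ)
    (fun x _ => ?_) (fun x _ => ?_)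
  · exact (continuous_id.dotProduct continuous_const).lowerSemicontinuous.lowerSemicontinuousOn _
  · exact (((dotProductBilin ℝ ℝ).flip (A *ᵥ y)).convexOn (convex_stdSimplex ℝ ι)).quasiconvexOn
  · exact (continuous_const.dotProduct (continuous_const.matrix_mulVec continuous_id))
      |>.upperSemicontinuous.upperSemicontinuousOn _
  · exact ((dotProductBilin ℝ ℝ x ∘ₗ A.mulVecLin).concaveOn (convex_stdSimplex ℝ κ)).quasiconcaveOn

theorem Matrix.exists_minimax_value (A : Matrix ι κ ℝ) :
    ∃ v : ℝ, (∃ x ∈ stdSimplex ℝ ι, ∀ j, (Aᵀ *ᵥ x) j ≤ v) ∧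
      ∃ y ∈ stdSimplex ℝ κ, ∀ i, v ≤ (A *ᵥ y) i := by
  classical
  obtain ⟨x, hx, y, hy, hxy⟩ := A.exists_isSaddlePointOn_stdSimplex
  refine ⟨x ⬝ᵥ (A *ᵥ y), ⟨x, hx, fun j => ?_⟩, y, hy, fun i => ?_⟩
  · have : x ⬝ᵥ (A *ᵥ Pi.single j 1) ≤ _ := hxy x hx _ (single_mem_stdSimplex ℝ j)
    rwa [mulVec_single_one, dotProduct_comm] at this
  · simpa only [single_one_dotProduct] using hxy _ (single_mem_stdSimplex ℝ i) y hy

theorem Matrix.exists_isLeast_isGreatest_stdSimplex (A : Matrix ι κ ℝ) :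
    ∃ v : ℝ, IsLeast {μ | ∃ x ∈ stdSimplex ℝ ι, ∀ j, (Aᵀ *ᵥ x) j ≤ μ} v ∧
      IsGreatest {ν | ∃ y ∈ stdSimplex ℝ κ, ∀ i, ν ≤ (A *ᵥ y) i} v := by
  obtain ⟨v, ⟨x, hx, hv_x⟩, y, hy, hv_y⟩ := A.exists_minimax_value
  refine ⟨v, ⟨⟨x, hx, hv_x⟩, ?_⟩, ⟨y, hy, hv_y⟩, ?_⟩
  · rintro μ ⟨x', hx', hμ⟩
    exact A.le_of_mem_stdSimplex hx' hy hμ hv_y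
  · rintro ν ⟨y', hy', hν⟩
    exact A.le_of_mem_stdSimplex hx hy' hv_x hν

end Minimax

/-- Strong duality between the two game LPs:
`min{μ : μ·e ⪰ Aᵀx, eᵀx = 1, x ⪰ 0} = max{ν : ν·e ⪯ Ay, eᵀy = 1, y ⪰ 0}`. -/
theorem stmt_2 (m1 m2 : ℕ) (hm1 : 0 < m1) (hm2 : 0 < m2)
    (A : Matrix (Fin m1) (Fin m2) ℝ) :
    sInf {μ : ℝ | ∃ x : Fin m1 → ℝ, (∀ i, 0 ≤ x i) ∧ (∑ i, x i) = 1 ∧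
        ∀ j, (∑ i, A i j * x i) ≤ μ} =
    sSup {ν : ℝ | ∃ y : Fin m2 → ℝ, (∀ j, 0 ≤ y j) ∧ (∑ j, y j) = 1 ∧
        ∀ i, ν ≤ ∑ j, A i j * y j} := by
  have : Nonempty (Fin m1) := ⟨⟨0, hm1⟩⟩
  have : Nonempty (Fin m2) := ⟨⟨0, hm2⟩⟩
  obtain ⟨v, hmin, hmax⟩ := A.exists_isLeast_isGreatest_stdSimplex
  simp only [stdSimplex, Set.mem_ofPred_eq, and_assoc] at hmin hmax
  exact hmin.csInf_eq.trans hmax.csSup_eq.symm
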